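/- There are infinitely many triples (x, y, z) of natural numbers such that x + y = z, every base-3 digit of x lies in {0, 1}, every base-4 digit of y lies in {0, 1}, and every base-7 digit of z lies in {0, 1}. -/

import Mathlib

namespace RDS

/-- sum of 3^0 + ... + 3^a -/
def S3 : ℕ → ℕ
  | 0 => 1
  | n + 1 => S3 n + 3 ^ (n + 1)

def S4 : ℕ → ℕ
  | 0 => 1
  | n + 1 => S4 n + 4 ^ (n + 1)

def S7 : ℕ → ℕ
  | 0 => 1
  | n + 1 => S7 n + 7 ^ (n + 1)

lemma S3_eq (n : ℕ) : 2 * S3 n + 1 = 3 ^ (n + 1) := by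
  induction n with
  | zero => rfl
  | succ n ih => rw [S3]; rw [pow_succ 3 (n+1)]; omega

lemma S4_eq (n : ℕ) : 3 * S4 n + 1 = 4 ^ (n + 1) := by
  induction n with
  | zero => rfl
  | succ n ih => rw [S4]; rw [pow_succ 4 (n+1)]; omega

lemma S7_eq (n : ℕ) : 6 * S7 n + 1 = 7 ^ (n + 1) := by
  induction n with
  | zero => rfl
  | succ n ih => rw [S7]; rw [pow_succ 7 (n+1)]; omega

/-- all base-b digits of x are ≤ 1, expressed arithmetically -/
def DP (b x : ℕ) : Prop := ∀ i : ℕ, x / b ^ i % b ≤ 1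

lemma dp_zero (b : ℕ) : DP b 0 := by
  intro i; simp [Nat.zero_div]

lemma dp_one {b : ℕ} (hb : 2 ≤ b) : DP b 1 := by
  intro i
  rcases i with _ | i
  · rw [pow_zero, Nat.div_one, Nat.mod_eq_of_lt (by omega)]
  · have h1 : 1 < b ^ (i + 1) := by
      calc 1 < b := by omega
      _ = b ^ 1 := (pow_one b).symm
      _ ≤ b ^ (i + 1) := Nat.pow_le_pow_right (by omega) (by omega)
    rw [Nat.div_eq_of_lt h1]
    simp

lemma dp_digits {b x : ℕ} (hb : 2 ≤ b) (h : DP b x) :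
    ∀ d ∈ Nat.digits b x, d ≤ 1 := by
  induction x using Nat.strong_induction_on with
  | _ x ih =>
    rcases Nat.eq_zero_or_pos x with hx | hx
    · subst hx; simp
    · rw [Nat.digits_def' (by omega : 1 < b) hx]
      intro d hd
      rcases List.mem_cons.mp hd with hd | hd
      · subst hd
        have := h 0
        simpa using this
      · refine ih (x / b) (Nat.div_lt_self hx (by omega)) ?_ d hd
        intro i
        have : x / b / b ^ i = x / b ^ (i + 1) := by
          rw [Nat.div_div_eq_div_mul, pow_succ']
        rw [this]
        exact h (i + 1)

lemma dp_add_pow {b k x : ℕ} (hb : 2 ≤ b) (hx : x < b ^ k) (h : DP b x) :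
    DP b (x + b ^ k) := by
  intro i
  rcases lt_trichotomy i k with hik | hik | hik
  · -- i < k
    have hsplit : b ^ k = b ^ i * b ^ (k - i) := by
      rw [← pow_add]; congr 1; omega
    have hpos : 0 < b ^ i := (Nat.pow_pos (by omega) : 0 < b ^ i)
    rw [hsplit, Nat.add_mul_div_left _ _ hpos]
    have hki : k - i = (k - i - 1) + 1 := by omega
    rw [hki, pow_succ']
    rw [Nat.add_mul_mod_self_left]
    exact h i
  · -- i = k
    subst hik
    rw [Nat.add_div_right _ (Nat.pow_pos (by omega) : 0 < b ^ i)]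
    have : x / b ^ i = 0 := Nat.div_eq_of_lt hx
    rw [this]
    have : (0 + 1) % b = 1 := Nat.mod_eq_of_lt (by omega)
    omega
  · -- i > k
    have hlt : x + b ^ k < b ^ i := by
      have h1 : x + b ^ k < 2 * b ^ k := by omega
      have h2 : 2 * b ^ k ≤ b * b ^ k := Nat.mul_le_mul_right _ (by omega)
      have h3 : b * b ^ k = b ^ (k + 1) := (pow_succ' b k).symm
      have h4 : b ^ (k + 1) ≤ b ^ i := Nat.pow_le_pow_right (by omega) (by omega)
      omega
    rw [Nat.div_eq_of_lt hlt]
    simp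

/-- balance condition on the three systems {3^0..3^a}, {4^0..4^b}, {7^0..7^c} -/
def H (a b c : ℕ) : Prop :=
  3 ^ a < 4 ^ (b + 1) ∧ 3 ^ a < 7 ^ (c + 1) ∧
  4 ^ b < 3 ^ (a + 1) ∧ 4 ^ b < 7 ^ (c + 1) ∧
  7 ^ c < 3 ^ (a + 1) ∧ 7 ^ c < 4 ^ (b + 1)

lemma S3_le_succ (n : ℕ) : S3 n ≤ S3 (n + 1) := Nat.le_add_right _ _
lemma S4_le_succ (n : ℕ) : S4 n ≤ S4 (n + 1) := Nat.le_add_right _ _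
lemma S7_le_succ (n : ℕ) : S7 n ≤ S7 (n + 1) := Nat.le_add_right _ _

lemma pow_mod_31 (b : ℕ) : 4 ^ b % 3 = 1 := by
  induction b with
  | zero => rfl
  | succ b ih => rw [pow_succ]; omega

lemma pow_mod_731 (c : ℕ) : 7 ^ c % 3 = 1 := by
  induction c with
  | zero => rfl
  | succ c ih => rw [pow_succ]; omega

lemma pow3_mod2 (a : ℕ) : 3 ^ a % 2 = 1 := by
  induction a with
  | zero => rfl
  | succ a ih => rw [pow_succ]; omega

lemma pow7_mod2 (c : ℕ) : 7 ^ c % 2 = 1 := by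
  induction c with
  | zero => rfl
  | succ c ih => rw [pow_succ]; omega

lemma pow3_mod7 (a : ℕ) : 3 ^ a % 7 ≠ 0 := by
  intro h
  have h7 : (7 : ℕ).Prime := by norm_num
  have : (7 : ℕ) ∣ 3 ^ a := Nat.dvd_of_mod_eq_zero h
  have : (7 : ℕ) ∣ 3 := h7.dvd_of_dvd_pow this
  omega

lemma pow4_mod7 (b : ℕ) : 4 ^ b % 7 ≠ 0 := by
  intro h
  have h7 : (7 : ℕ).Prime := by norm_num
  have : (7 : ℕ) ∣ 4 ^ b := Nat.dvd_of_mod_eq_zero h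
  have : (7 : ℕ) ∣ 4 := h7.dvd_of_dvd_pow this
  omega

lemma pow7_mod7 (c : ℕ) (hc : 1 ≤ c) : 7 ^ c % 7 = 0 := by
  rcases Nat.exists_eq_add_of_le hc with ⟨k, rfl⟩
  rw [add_comm, pow_succ]
  omega

lemma pow3_mod3 (a : ℕ) (ha : 1 ≤ a) : 3 ^ a % 3 = 0 := by
  rcases Nat.exists_eq_add_of_le ha with ⟨k, rfl⟩
  rw [add_comm, pow_succ]
  omega

lemma pow4_mod2 (b : ℕ) (hb : 1 ≤ b) : 4 ^ b % 2 = 0 := by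
  rcases Nat.exists_eq_add_of_le hb with ⟨k, rfl⟩
  rw [add_comm, pow_succ]
  omega

/-- The main lemma: under balance H, every d in [-S7 c, S3 a + S4 b] is
representable as x + y - w with x, y, w having 0/1 digits in bases 3, 4, 7. -/
lemma main : ∀ (n a b c : ℕ) (d : ℤ), a + b + c ≤ n → H a b c →
    -(S7 c : ℤ) ≤ d → d ≤ (S3 a : ℤ) + (S4 b : ℤ) →
    ∃ x y w : ℕ, DP 3 x ∧ x ≤ S3 a ∧ DP 4 y ∧ y ≤ S4 b ∧ DP 7 w ∧ w ≤ S7 c ∧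
      (x : ℤ) + (y : ℤ) = d + (w : ℤ) := by
  intro n
  induction n with
  | zero =>
    intro a b c d hn _ h1 h2
    have ha : a = 0 := by omega
    have hb : b = 0 := by omega
    have hc : c = 0 := by omega
    subst ha; subst hb; subst hc
    -- base case: S3 0 = S4 0 = S7 0 = 1, d ∈ [-1, 2]
    have hS3 : S3 0 = 1 := rfl
    have hS4 : S4 0 = 1 := rfl
    have hS7 : S7 0 = 1 := rfl
    rw [hS3, hS4] at h2
    rw [hS7] at h1
    push_cast at h1 h2
    interval_cases d
    · exact ⟨0, 0, 1, dp_zero 3, by simp [S3], dp_zero 4, by simp [S4],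
        dp_one (by norm_num), by simp [S7], by norm_num⟩
    · exact ⟨0, 0, 0, dp_zero 3, by simp [S3], dp_zero 4, by simp [S4],
        dp_zero 7, by simp [S7], by norm_num⟩
    · exact ⟨1, 0, 0, dp_one (by norm_num), by simp [S3], dp_zero 4, by simp [S4],
        dp_zero 7, by simp [S7], by norm_num⟩
    · exact ⟨1, 1, 0, dp_one (by norm_num), by simp [S3], dp_one (by norm_num),
        by simp [S4], dp_zero 7, by simp [S7], by norm_num⟩
  | succ n ih =>
    intro a b c d hn hH h1 h2
    obtain ⟨hH1, hH2, hH3, hH4, hH5, hH6⟩ := hH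
    by_cases hzero : a = 0 ∧ b = 0 ∧ c = 0
    · obtain ⟨ha, hb, hc⟩ := hzero; subst ha; subst hb; subst hc
      exact ih 0 0 0 d (by omega) ⟨hH1, hH2, hH3, hH4, hH5, hH6⟩ h1 h2
    -- Not all zero: find the unique maximum among 3^a, 4^b, 7^c
    by_cases hmax3 : 4 ^ b ≤ 3 ^ a ∧ 7 ^ c ≤ 3 ^ a
    · -- 3^a is the max
      obtain ⟨hm1, hm2⟩ := hmax3
      have ha1 : 1 ≤ a := by
        by_contra ha0
        have ha0' : a = 0 := by omega
        subst ha0'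
        simp only [pow_zero] at hm1 hm2
        have hb0 : b = 0 := by
          by_contra hb0
          have : 4 ^ 1 ≤ 4 ^ b := Nat.pow_le_pow_right (by norm_num) (by omega)
          simp at this; omega
        have hc0 : c = 0 := by
          by_contra hc0
          have : 7 ^ 1 ≤ 7 ^ c := Nat.pow_le_pow_right (by norm_num) (by omega)
          simp at this; omega
        exact hzero ⟨rfl, hb0, hc0⟩
      obtain ⟨a', rfl⟩ : ∃ a', a = a' + 1 := ⟨a - 1, by omega⟩
      -- strict maxness
      have hs1 : 4 ^ b < 3 ^ (a' + 1) := by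
        rcases Nat.lt_or_ge (4 ^ b) (3 ^ (a' + 1)) with h | h
        · exact h
        · exfalso
          have heq : 4 ^ b = 3 ^ (a' + 1) := by omega
          have := pow_mod_31 b
          have := pow3_mod3 (a' + 1) (by omega)
          omega
      have hs2 : 7 ^ c < 3 ^ (a' + 1) := by
        rcases Nat.lt_or_ge (7 ^ c) (3 ^ (a' + 1)) with h | h
        · exact h
        · exfalso
          have heq : 7 ^ c = 3 ^ (a' + 1) := by omega
          have := pow_mod_731 c
          have := pow3_mod3 (a' + 1) (by omega)
          omega
      -- H for the reduced state
      have hp3 : 3 ^ a' < 3 ^ (a' + 1) := by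
        rw [pow_succ]
        have : 0 < 3 ^ a' := Nat.pow_pos (by norm_num)
        omega
      have hH' : H a' b c := ⟨lt_trans hp3 hH1, lt_trans hp3 hH2, hs1, hH4, hs2, hH6⟩
      -- coverage inequality COV3 : 3^(a'+1) ≤ S3 a' + S4 b + S7 c + 1
      have e1 := S3_eq a'
      have e2 := S4_eq b
      have e3 := S7_eq c
      have hCOV : 3 ^ (a' + 1) ≤ S3 a' + S4 b + S7 c + 1 := by omega
      have hS3rec : S3 (a' + 1) = S3 a' + 3 ^ (a' + 1) := rfl
      by_cases hd : d ≤ (S3 a' : ℤ) + (S4 b : ℤ)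
      · -- skip 3^(a'+1)
        obtain ⟨x, y, w, hx, hxle, hy, hyle, hw, hwle, heq⟩ :=
          ih a' b c d (by omega) hH' h1 hd
        exact ⟨x, y, w, hx, le_trans hxle (S3_le_succ a'), hy, hyle, hw, hwle, heq⟩
      · -- take 3^(a'+1)
        push_neg at hd
        obtain ⟨x, y, w, hx, hxle, hy, hyle, hw, hwle, heq⟩ :=
          ih a' b c (d - (3 ^ (a' + 1) : ℕ)) (by omega) hH'
            (by omega) (by omega)
        refine ⟨x + 3 ^ (a' + 1), y, w, ?_, by omega, hy, hyle, hw, hwle, ?_⟩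
        · exact dp_add_pow (by norm_num) (by omega) hx
        · push_cast at heq ⊢; linarith
    · by_cases hmax4 : 3 ^ a ≤ 4 ^ b ∧ 7 ^ c ≤ 4 ^ b
      · -- 4^b is the max
        obtain ⟨hm1, hm2⟩ := hmax4
        have hb1 : 1 ≤ b := by
          by_contra hb0
          have hb0' : b = 0 := by omega
          subst hb0'
          simp only [pow_zero] at hm1 hm2
          have ha0 : a = 0 := by
            by_contra ha0
            have : 3 ^ 1 ≤ 3 ^ a := Nat.pow_le_pow_right (by norm_num) (by omega)
            simp at this; omega
          subst ha0
          exact hmax3 ⟨by norm_num, by simpa using hm2⟩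
        obtain ⟨b', rfl⟩ : ∃ b', b = b' + 1 := ⟨b - 1, by omega⟩
        have hs1 : 3 ^ a < 4 ^ (b' + 1) := by
          rcases Nat.lt_or_ge (3 ^ a) (4 ^ (b' + 1)) with h | h
          · exact h
          · exfalso
            have heq : 3 ^ a = 4 ^ (b' + 1) := by omega
            have := pow3_mod2 a
            have := pow4_mod2 (b' + 1) (by omega)
            omega
        have hs2 : 7 ^ c < 4 ^ (b' + 1) := by
          rcases Nat.lt_or_ge (7 ^ c) (4 ^ (b' + 1)) with h | h
          · exact h
          · exfalso
            have heq : 7 ^ c = 4 ^ (b' + 1) := by omega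
            have := pow7_mod2 c
            have := pow4_mod2 (b' + 1) (by omega)
            omega
        have hp4 : 4 ^ b' < 4 ^ (b' + 1) := by
          rw [pow_succ]
          have : 0 < 4 ^ b' := Nat.pow_pos (by norm_num)
          omega
        have hH' : H a b' c := ⟨hs1, hH2, lt_trans hp4 hH3, lt_trans hp4 hH4, hH5, hs2⟩
        have e1 := S3_eq a
        have e2 := S4_eq b'
        have e3 := S7_eq c
        have hCOV : 4 ^ (b' + 1) ≤ S3 a + S4 b' + S7 c + 1 := by omega
        have hS4rec : S4 (b' + 1) = S4 b' + 4 ^ (b' + 1) := rfl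
        by_cases hd : d ≤ (S3 a : ℤ) + (S4 b' : ℤ)
        · obtain ⟨x, y, w, hx, hxle, hy, hyle, hw, hwle, heq⟩ :=
            ih a b' c d (by omega) hH' h1 hd
          exact ⟨x, y, w, hx, hxle, hy, le_trans hyle (S4_le_succ b'), hw, hwle, heq⟩
        · push_neg at hd
          obtain ⟨x, y, w, hx, hxle, hy, hyle, hw, hwle, heq⟩ :=
            ih a b' c (d - (4 ^ (b' + 1) : ℕ)) (by omega) hH'
              (by omega) (by omega)
          refine ⟨x, y + 4 ^ (b' + 1), w, hx, hxle, ?_, by omega, hw, hwle, ?_⟩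
          · exact dp_add_pow (by norm_num) (by omega) hy
          · push_cast at heq ⊢; linarith
      · -- 7^c is the max
        have hm1 : 3 ^ a ≤ 7 ^ c := by
          by_contra hcon
          push_neg at hcon
          rcases Nat.lt_or_ge (3 ^ a) (4 ^ b) with h4 | h4
          · rcases Nat.lt_or_ge (4 ^ b) (7 ^ c) with h7 | h7
            · omega
            · exact hmax4 ⟨by omega, by omega⟩
          · exact hmax3 ⟨by omega, by omega⟩
        have hm2 : 4 ^ b ≤ 7 ^ c := by
          by_contra hcon
          push_neg at hcon
          rcases Nat.lt_or_ge (4 ^ b) (3 ^ a) with h3 | h3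
          · exact hmax3 ⟨by omega, by omega⟩
          · exact hmax4 ⟨by omega, by omega⟩
        have hc1 : 1 ≤ c := by
          by_contra hc0
          have hc0' : c = 0 := by omega
          subst hc0'
          simp only [pow_zero] at hm1 hm2
          have ha0 : a = 0 := by
            by_contra ha0
            have : 3 ^ 1 ≤ 3 ^ a := Nat.pow_le_pow_right (by norm_num) (by omega)
            simp at this; omega
          have hb0 : b = 0 := by
            by_contra hb0
            have : 4 ^ 1 ≤ 4 ^ b := Nat.pow_le_pow_right (by norm_num) (by omega)
            simp at this; omega
          subst ha0
          exact hmax3 ⟨by simpa using hm2, by norm_num⟩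
        obtain ⟨c', rfl⟩ : ∃ c', c = c' + 1 := ⟨c - 1, by omega⟩
        have hs1 : 3 ^ a < 7 ^ (c' + 1) := by
          rcases Nat.lt_or_ge (3 ^ a) (7 ^ (c' + 1)) with h | h
          · exact h
          · exfalso
            have heq : 3 ^ a = 7 ^ (c' + 1) := by omega
            have := pow3_mod7 a
            have := pow7_mod7 (c' + 1) (by omega)
            omega
        have hs2 : 4 ^ b < 7 ^ (c' + 1) := by
          rcases Nat.lt_or_ge (4 ^ b) (7 ^ (c' + 1)) with h | h
          · exact h
          · exfalso
            have heq : 4 ^ b = 7 ^ (c' + 1) := by omega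
            have := pow4_mod7 b
            have := pow7_mod7 (c' + 1) (by omega)
            omega
        have hp7 : 7 ^ c' < 7 ^ (c' + 1) := by
          rw [pow_succ]
          have : 0 < 7 ^ c' := Nat.pow_pos (by norm_num)
          omega
        have hH' : H a b c' := ⟨hH1, hs1, hH3, hs2, lt_trans hp7 hH5, lt_trans hp7 hH6⟩
        have e1 := S3_eq a
        have e2 := S4_eq b
        have e3 := S7_eq c'
        have hCOV : 7 ^ (c' + 1) ≤ S3 a + S4 b + S7 c' + 1 := by omega
        have hS7rec : S7 (c' + 1) = S7 c' + 7 ^ (c' + 1) := rfl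
        by_cases hd : -(S7 c' : ℤ) ≤ d
        · obtain ⟨x, y, w, hx, hxle, hy, hyle, hw, hwle, heq⟩ :=
            ih a b c' d (by omega) hH' hd h2
          exact ⟨x, y, w, hx, hxle, hy, hyle, hw, le_trans hwle (S7_le_succ c'), heq⟩
        · push_neg at hd
          obtain ⟨x, y, w, hx, hxle, hy, hyle, hw, hwle, heq⟩ :=
            ih a b c' (d + (7 ^ (c' + 1) : ℕ)) (by omega) hH'
              (by omega) (by omega)
          refine ⟨x, y, w + 7 ^ (c' + 1), hx, hxle, hy, hyle, ?_, by omega, ?_⟩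
          · exact dp_add_pow (by norm_num) (by omega) hw
          · push_cast at heq ⊢; linarith

/-- largest exponent with 3^(A l) < 7^(l+1) -/
def A (l : ℕ) : ℕ := Nat.log 3 (7 ^ (l + 1) - 1)

def B (l : ℕ) : ℕ := Nat.log 4 (7 ^ (l + 1) - 1)

lemma pow7_pos (l : ℕ) : 0 < 7 ^ l := Nat.pow_pos (by norm_num)

lemma pow7_ge7 (l : ℕ) : 7 ≤ 7 ^ (l + 1) := by
  calc (7:ℕ) = 7 ^ 1 := (pow_one 7).symm
  _ ≤ 7 ^ (l + 1) := Nat.pow_le_pow_right (by norm_num) (by omega)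

lemma A_lt (l : ℕ) : 3 ^ (A l) < 7 ^ (l + 1) := by
  have h7 := pow7_ge7 l
  have := Nat.pow_log_le_self 3 (show 7 ^ (l + 1) - 1 ≠ 0 by omega)
  unfold A
  omega

lemma A_ge (l : ℕ) : 7 ^ (l + 1) ≤ 3 ^ (A l + 1) := by
  have h7 := pow7_ge7 l
  have := Nat.lt_pow_succ_log_self (b := 3) (by norm_num) (7 ^ (l + 1) - 1)
  unfold A
  omega

lemma B_lt (l : ℕ) : 4 ^ (B l) < 7 ^ (l + 1) := by
  have h7 := pow7_ge7 l
  have := Nat.pow_log_le_self 4 (show 7 ^ (l + 1) - 1 ≠ 0 by omega)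
  unfold B
  omega

lemma B_ge (l : ℕ) : 7 ^ (l + 1) ≤ 4 ^ (B l + 1) := by
  have h7 := pow7_ge7 l
  have := Nat.lt_pow_succ_log_self (b := 4) (by norm_num) (7 ^ (l + 1) - 1)
  unfold B
  omega

lemma H_canonical (l : ℕ) : H (A l) (B l) l := by
  have h1 := A_lt l
  have h2 := A_ge l
  have h3 := B_lt l
  have h4 := B_ge l
  have h5 : 7 ^ l < 7 ^ (l + 1) := by
    rw [pow_succ]
    have := pow7_pos l
    omega
  exact ⟨lt_of_lt_of_le h1 h4, h1, lt_of_lt_of_le h3 h2, h3,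
    lt_of_lt_of_le h5 h2, lt_of_lt_of_le h5 h4⟩

/-- favorable level: the 3-power sum is big enough -/
def Fav (l : ℕ) : Prop := 4 * 7 ^ (l + 1) ≤ 3 ^ (A l + 2)

instance (l : ℕ) : Decidable (Fav l) := by unfold Fav; infer_instance

lemma fav_S (l : ℕ) (h : Fav l) : 7 ^ (l + 1) ≤ S3 (A l) + S4 (B l) := by
  have e1 := S3_eq (A l)
  have e2 := S4_eq (B l)
  have h4 := B_ge l
  unfold Fav at h
  have e3 : 3 ^ (A l + 2) = 3 * 3 ^ (A l + 1) := by
    rw [pow_succ]; ring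
  omega

lemma pow3_lt_iff {m n : ℕ} : 3 ^ m < 3 ^ n ↔ m < n :=
  Nat.pow_lt_pow_iff_right (by norm_num)

/-- among any three consecutive levels, one is favorable -/
lemma anchor3 (l : ℕ) : Fav (l + 2) ∨ Fav (l + 1) ∨ Fav l := by
  by_cases f2 : Fav (l + 2)
  · exact Or.inl f2
  by_cases f1 : Fav (l + 1)
  · exact Or.inr (Or.inl f1)
  refine Or.inr (Or.inr ?_)
  unfold Fav at f2 f1 ⊢
  push_neg at f2 f1
  have hA2g : 7 ^ (l + 3) ≤ 3 ^ (A (l + 2) + 1) := by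
    have h := A_ge (l + 2); rwa [show l + 2 + 1 = l + 3 from by omega] at h
  have hA1l : 3 ^ A (l + 1) < 7 ^ (l + 2) := by
    have h := A_lt (l + 1); rwa [show l + 1 + 1 = l + 2 from by omega] at h
  have hA1g : 7 ^ (l + 2) ≤ 3 ^ (A (l + 1) + 1) := by
    have h := A_ge (l + 1); rwa [show l + 1 + 1 = l + 2 from by omega] at h
  have hA0g : 7 ^ (l + 1) ≤ 3 ^ (A l + 1) := A_ge l
  have f2' : 3 ^ (A (l + 2) + 2) < 4 * 7 ^ (l + 3) := by
    rwa [show l + 2 + 1 = l + 3 from by omega] at f2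
  have f1' : 3 ^ (A (l + 1) + 2) < 4 * 7 ^ (l + 2) := by
    simpa only [show l + 1 + 1 = l + 2 from by omega] using f1
  have h73 : (7:ℕ) ^ (l + 3) = 7 * 7 ^ (l + 2) := by
    rw [show l + 3 = (l + 2) + 1 from by omega, pow_succ]; ring
  have h72 : (7:ℕ) ^ (l + 2) = 7 * 7 ^ (l + 1) := by
    rw [show l + 2 = (l + 1) + 1 from by omega, pow_succ]; ring
  have e1 : (3:ℕ) ^ (A (l + 1) + 1) = 3 * 3 ^ (A (l + 1)) := by rw [pow_succ]; ring
  have e2 : (3:ℕ) ^ (A (l + 1) + 2) = 3 * 3 ^ (A (l + 1) + 1) := by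
    rw [show A (l + 1) + 2 = (A (l + 1) + 1) + 1 from by omega, pow_succ]; ring
  -- Step 1: a1 + 1 < a2 + 1
  have hstep1 : A (l + 1) + 1 < A (l + 2) + 1 := by
    rw [← pow3_lt_iff]
    have h7pos := pow7_pos (l + 2)
    have c2 : (3:ℕ) ^ (A (l + 1) + 1) < 7 ^ (l + 3) := by omega
    exact lt_of_lt_of_le c2 hA2g
  -- Step 2: a1 + 2 ≤ a2
  have hstep2 : A (l + 1) + 2 ≤ A (l + 2) := by
    by_contra hcon
    have he : A (l + 1) + 2 = A (l + 2) + 1 := by omega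
    have heq : (3:ℕ) ^ (A (l + 1) + 2) = 3 ^ (A (l + 2) + 1) := by rw [he]
    have h7pos := pow7_pos (l + 2)
    omega
  -- Step 3: 27 * 3^(a1+1) < 28 * 7^(l+2)
  have hstep3 : 27 * 3 ^ (A (l + 1) + 1) < 28 * 7 ^ (l + 2) := by
    have c1 : 27 * 3 ^ (A (l + 1) + 1) = 3 ^ (A (l + 1) + 4) := by
      rw [show A (l + 1) + 4 = (A (l + 1) + 1) + 3 from by omega, pow_add]; ring
    have c2 : (3:ℕ) ^ (A (l + 1) + 4) ≤ 3 ^ (A (l + 2) + 2) :=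
      Nat.pow_le_pow_right (by norm_num) (by omega)
    omega
  -- a1 ≥ 3
  have ha1ge : 3 ≤ A (l + 1) := by
    by_contra hcon
    have h49 : (49:ℕ) ≤ 7 ^ (l + 2) := by
      calc (49:ℕ) = 7 ^ 2 := by norm_num
      _ ≤ 7 ^ (l + 2) := Nat.pow_le_pow_right (by norm_num) (by omega)
    have hle : (3:ℕ) ^ (A (l + 1) + 1) ≤ 3 ^ 3 :=
      Nat.pow_le_pow_right (by norm_num) (by omega)
    norm_num at hle
    omega
  obtain ⟨a1', ha1'⟩ : ∃ a1', A (l + 1) = a1' + 1 := ⟨A (l + 1) - 1, by omega⟩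
  -- Step 4: a1 - 1 ≤ a0
  have hstep4 : a1' ≤ A l := by
    have c1 : 243 * 3 ^ a1' = 27 * 3 ^ (A (l + 1) + 1) := by
      rw [ha1']
      rw [show (243:ℕ) * 3 ^ a1' = 3 ^ (a1' + 5) from by rw [pow_add]; ring]
      rw [show (27:ℕ) * 3 ^ (a1' + 1 + 1) = 3 ^ (a1' + 5) from by
        rw [show a1' + 5 = (a1' + 1 + 1) + 3 from by omega, pow_add]; ring]
    have c2 : 243 * 3 ^ a1' < 243 * 7 ^ (l + 1) := by omega
    have c3 : 3 ^ a1' < 7 ^ (l + 1) :=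
      Nat.lt_of_mul_lt_mul_left (a := 243) c2
    have h7 := pow7_ge7 l
    have c4 : 3 ^ a1' ≤ 7 ^ (l + 1) - 1 := by omega
    have := (Nat.le_log_iff_pow_le (by norm_num : 1 < 3)
      (by omega : 7 ^ (l + 1) - 1 ≠ 0)).mpr c4
    unfold A
    exact this
  -- Step 5: conclude
  have c5 : (3:ℕ) ^ (A (l + 1) + 1) ≤ 3 ^ (A l + 2) :=
    Nat.pow_le_pow_right (by norm_num) (by omega)
  have h7pos := pow7_pos (l + 1)
  omega

lemma N_lt_pow (N : ℕ) : N < 7 ^ (N + 1) := by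
  calc N < 2 ^ N := Nat.lt_two_pow_self
  _ ≤ 7 ^ N := Nat.pow_le_pow_left (by norm_num) N
  _ < 7 ^ (N + 1) := by
      rw [pow_succ]
      have := pow7_pos N
      omega

/-- at a favorable level l, we obtain a triple with z ≥ 7^(l+1) -/
lemma exists_triple_aux (l N : ℕ) (hl : N ≤ l) (hF : Fav l) :
    ∃ x y z : ℕ, N < z ∧ x + y = z ∧ DP 3 x ∧ DP 4 y ∧ DP 7 z := by
  have hH := H_canonical l
  have hS := fav_S l hF
  obtain ⟨x, y, w, hx, hxle, hy, hyle, hw, hwle, heq⟩ :=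
    main (A l + B l + l) (A l) (B l) l ((7 ^ (l + 1) : ℕ) : ℤ) (le_refl _) hH
      (by have h0 : (0:ℤ) ≤ ((7 ^ (l + 1) : ℕ) : ℤ) := Int.ofNat_nonneg _
          have h1 : (0:ℤ) ≤ ((S7 l : ℕ) : ℤ) := Int.ofNat_nonneg _
          omega)
      (by exact_mod_cast hS)
  refine ⟨x, y, x + y, ?_, rfl, hx, hy, ?_⟩
  · -- N < x + y
    have hz : x + y = 7 ^ (l + 1) + w := by exact_mod_cast heq
    have h1 : N < 7 ^ (N + 1) := N_lt_pow N
    have h2 : (7:ℕ) ^ (N + 1) ≤ 7 ^ (l + 1) :=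
      Nat.pow_le_pow_right (by norm_num) (by omega)
    omega
  · -- DP 7 (x + y)
    have hz : x + y = w + 7 ^ (l + 1) := by
      have : x + y = 7 ^ (l + 1) + w := by exact_mod_cast heq
      omega
    rw [hz]
    have e3 := S7_eq l
    exact dp_add_pow (by norm_num) (by omega) hw

/-- key existence statement -/
lemma exists_triple (N : ℕ) : ∃ x y z : ℕ, N < z ∧ x + y = z ∧
    DP 3 x ∧ DP 4 y ∧ DP 7 z := by
  -- choose a favorable level l ≥ N
  obtain hF | hF | hF := anchor3 N
  case _ => exact exists_triple_aux (N + 2) N (by omega) hF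
  case _ => exact exists_triple_aux (N + 1) N (by omega) hF
  case _ => exact exists_triple_aux N N (by omega) hF

end RDS

/-- There are infinitely many triples (x, y, z) of natural numbers with x + y = z such that
every base-3 digit of x, every base-4 digit of y, and every base-7 digit of z lies in
{0, …, 1}. -/
theorem infinitely_many_restricted_digit_sums :
    ∀ N : ℕ, ∃ x y z : ℕ, N < z ∧ x + y = z ∧
      (∀ d ∈ Nat.digits 3 x, d ≤ 1) ∧
      (∀ d ∈ Nat.digits 4 y, d ≤ 1) ∧
      (∀ d ∈ Nat.digits 7 z, d ≤ 1) := by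
  intro N
  obtain ⟨x, y, z, hz, hxyz, hx, hy, hz7⟩ := RDS.exists_triple N
  exact ⟨x, y, z, hz, hxyz, RDS.dp_digits (by norm_num) hx,
    RDS.dp_digits (by norm_num) hy, RDS.dp_digits (by norm_num) hz7⟩
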